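/- arXiv:2302.01873 — 4 statements merged into one kernel-verified Lean document; each statement's English description precedes it below -/
import Mathlib

section
/- Let C be a Hermitian operator and D any operator on a finite-dimensional complex Hilbert space, let O be a bounded operator, and let |φ⟩ be a unit vector. If ‖C − D‖ ≤ ‖C|φ⟩‖₂ (operator norm on the left, vector 2-norm on the right), then |⟨φ|D† O D|φ⟩ − ⟨φ|C O C|φ⟩| ≤ 3 ‖C|φ⟩‖₂ ‖C − D‖ ‖O‖. -/
open Matrix
open scoped Matrix.Norms.L2Operator

/-- Euclidean norm of a complex vector. -/
noncomputable def vecNorm {n : Type*} [Fintype n] (v : n → ℂ) : ℝ :=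
  Real.sqrt (star v ⬝ᵥ v).re

/-!
With `u = Cφ`, `v = Dφ` and `C = Cᴴ`, the difference of expectation values is
`⟪v, O v⟫ - ⟪u, O u⟫ = ⟪v - u, O v⟫ + ⟪u, O (v - u)⟫`. Here `‖v - u‖ ≤ ‖C - D‖ ≤ ‖u‖`, so
`‖v‖ ≤ 2‖u‖`, and Cauchy–Schwarz bounds the two terms by `2‖u‖‖C - D‖‖O‖` and `‖u‖‖C - D‖‖O‖`.
-/

open WithLp
open scoped InnerProductSpace

section InnerProductSpace

variable {𝕜 E : Type*} [RCLike 𝕜] [NormedAddCommGroup E] [InnerProductSpace 𝕜 E]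

theorem norm_inner_map_self_sub_le (O : E →L[𝕜] E) (u v : E) :
    ‖⟪v, O v⟫_𝕜 - ⟪u, O u⟫_𝕜‖ ≤ (‖v‖ + ‖u‖) * ‖v - u‖ * ‖O‖ := by
  have hsplit : ⟪v, O v⟫_𝕜 - ⟪u, O u⟫_𝕜 = ⟪v - u, O v⟫_𝕜 + ⟪u, O (v - u)⟫_𝕜 := by
    simp only [inner_sub_left, map_sub, inner_sub_right]
    ring
  calc ‖⟪v, O v⟫_𝕜 - ⟪u, O u⟫_𝕜‖
      ≤ ‖v - u‖ * ‖O v‖ + ‖u‖ * ‖O (v - u)‖ := by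
        rw [hsplit]
        exact (norm_add_le _ _).trans
          (add_le_add (norm_inner_le_norm _ _) (norm_inner_le_norm _ _))
    _ ≤ ‖v - u‖ * (‖O‖ * ‖v‖) + ‖u‖ * (‖O‖ * ‖v - u‖) := by
        gcongr <;> exact O.le_opNorm _
    _ = (‖v‖ + ‖u‖) * ‖v - u‖ * ‖O‖ := by ring

theorem norm_inner_map_self_sub_le_three_mul {O : E →L[𝕜] E} {u v : E} {δ : ℝ}
    (hvu : ‖v - u‖ ≤ δ) (hδ : δ ≤ ‖u‖) :
    ‖⟪v, O v⟫_𝕜 - ⟪u, O u⟫_𝕜‖ ≤ 3 * ‖u‖ * δ * ‖O‖ := by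
  have hv : ‖v‖ ≤ 2 * ‖u‖ :=
    calc ‖v‖ = ‖u + (v - u)‖ := by rw [add_sub_cancel]
      _ ≤ ‖u‖ + ‖v - u‖ := norm_add_le _ _
      _ ≤ 2 * ‖u‖ := by linarith
  calc ‖⟪v, O v⟫_𝕜 - ⟪u, O u⟫_𝕜‖ ≤ (‖v‖ + ‖u‖) * ‖v - u‖ * ‖O‖ :=
        norm_inner_map_self_sub_le O u v
    _ ≤ (2 * ‖u‖ + ‖u‖) * δ * ‖O‖ := by gcongr
    _ = 3 * ‖u‖ * δ * ‖O‖ := by ring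

end InnerProductSpace

namespace Matrix

variable {𝕜 n : Type*} [RCLike 𝕜] [Fintype n] [DecidableEq n]

theorem star_dotProduct_conjTranspose_mul_mul_mulVec (A O : Matrix n n 𝕜) (x : n → 𝕜) :
    star x ⬝ᵥ (Aᴴ * O * A) *ᵥ x =
      ⟪toLp 2 (A *ᵥ x), toEuclideanCLM (n := n) (𝕜 := 𝕜) O (toLp 2 (A *ᵥ x))⟫_𝕜 := by
  rw [toEuclideanCLM_toLp, EuclideanSpace.inner_toLp_toLp, dotProduct_comm (O *ᵥ _),
    star_mulVec, ← dotProduct_mulVec, mulVec_mulVec, mulVec_mulVec, Matrix.mul_assoc]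

theorem norm_toLp_mulVec_sub_mulVec_le (A B : Matrix n n 𝕜) (x : n → 𝕜) :
    ‖toLp 2 (A *ᵥ x) - toLp 2 (B *ᵥ x)‖ ≤ ‖A - B‖ * ‖toLp 2 x‖ := by
  rw [← WithLp.toLp_sub, ← sub_mulVec]
  exact l2_opNorm_mulVec _ _

end Matrix

theorem vecNorm_eq_norm_toLp {n : Type*} [Fintype n] (v : n → ℂ) :
    vecNorm v = ‖toLp 2 v‖ := by
  rw [vecNorm, @norm_eq_sqrt_re_inner ℂ, EuclideanSpace.inner_toLp_toLp, dotProduct_comm]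
  rfl

/-- tightness of expectation values for a Hermitian C and arbitrary D. -/
theorem stmt_1 {N : ℕ} (C D O : Matrix (Fin N) (Fin N) ℂ) (hC : C.IsHermitian)
    (φ : Fin N → ℂ) (hφ : vecNorm φ = 1)
    (h : ‖C - D‖ ≤ vecNorm (C.mulVec φ)) :
    ‖star φ ⬝ᵥ (Dᴴ * O * D).mulVec φ - star φ ⬝ᵥ (C * O * C).mulVec φ‖
      ≤ 3 * vecNorm (C.mulVec φ) * ‖C - D‖ * ‖O‖ := by
  rw [vecNorm_eq_norm_toLp] at hφ h ⊢
  have hDC : ‖toLp 2 (D *ᵥ φ) - toLp 2 (C *ᵥ φ)‖ ≤ ‖C - D‖ := by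
    simpa only [hφ, mul_one, norm_sub_rev D C] using norm_toLp_mulVec_sub_mulVec_le D C φ
  have hCOC : C * O * C = Cᴴ * O * C := by rw [hC.eq]
  rw [hCOC, star_dotProduct_conjTranspose_mul_mul_mulVec,
    star_dotProduct_conjTranspose_mul_mul_mulVec, ← l2_opNorm_toEuclideanCLM O]
  exact norm_inner_map_self_sub_le_three_mul hDC h
end

section
/- Let H be a Hermitian operator with eigenvalues E₀ < E₁ ≤ E₂ ≤ … (all E_l ≥ 0), spectral gap satisfying Δ ≤ E₁ − E₀, ground eigenvector |E₀⟩, and let |ψ₀⟩ be a unit vector with γ := |⟨ψ₀|E₀⟩| > 0. For ε ∈ (0,1] and τ ≥ (1/Δ)·√(2 log(1/(εγ))), define |ψ̃⟩ = e^{−τ²H²/2}|ψ₀⟩ and |ψ⟩ = |ψ̃⟩/‖|ψ̃⟩‖. Then 1 − |⟨ψ|E₀⟩| ≤ ε²/2. -/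
open Matrix
open scoped Matrix.Norms.L2Operator ComplexOrder

/-! In an orthonormal eigenbasis of `H` the filter `e^{-τ²H²/2}` multiplies the coefficient of an
eigenvector of eigenvalue `μ` by `e^{-τ²μ²/2}`. By the gap, the ground eigenspace is the line
through `v`, whose weight `γ` is multiplied by `e^{-τ²E₀²/2}`; every eigenvector orthogonal to `v`
has `μ ≥ E₀ + Δ ≥ 0` and is damped by `e^{-τ²(E₀+Δ)²/2} ≤ εγ e^{-τ²E₀²/2}`, by the choice of `τ`.
Hence `‖ψ̃‖² ≤ (γ e^{-τ²E₀²/2})² (1 + ε²)`, and `1/√(1 + ε²) ≥ 1 - ε²/2`. -/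

section

variable {n : Type*} [Fintype n]

lemma star_dotProduct_eq_inner (x y : n → ℂ) :
    star x ⬝ᵥ y = inner ℂ (WithLp.toLp 2 x) (WithLp.toLp 2 y) := by
  rw [EuclideanSpace.inner_toLp_toLp, dotProduct_comm]

lemma norm_star_dotProduct_comm (x y : n → ℂ) : ‖star x ⬝ᵥ y‖ = ‖star y ⬝ᵥ x‖ := by
  rw [star_dotProduct, norm_star]

lemma vecNorm_eq_norm_toLp_s4 (x : n → ℂ) : vecNorm x = ‖WithLp.toLp 2 x‖ := by
  rw [vecNorm, star_dotProduct_eq_inner]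
  exact (norm_eq_sqrt_re_inner (𝕜 := ℂ) _).symm

lemma star_dotProduct_self_eq_vecNorm_sq (x : n → ℂ) :
    star x ⬝ᵥ x = ((vecNorm x ^ 2 : ℝ) : ℂ) := by
  rw [vecNorm_eq_norm_toLp_s4, star_dotProduct_eq_inner, inner_self_eq_norm_sq_to_K]
  norm_cast

lemma vecNorm_pos {x : n → ℂ} (hx : x ≠ 0) : 0 < vecNorm x := by
  rw [vecNorm_eq_norm_toLp_s4, norm_pos_iff]
  exact fun h => hx (congrArg WithLp.ofLp h)

lemma vecNorm_sq_eq_sum_norm_sq {ι : Type*} [Fintype ι]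
    (b : OrthonormalBasis ι ℂ (EuclideanSpace ℂ n)) (x : n → ℂ) :
    vecNorm x ^ 2 = ∑ j, ‖star ⇑(b j) ⬝ᵥ x‖ ^ 2 := by
  simp_rw [vecNorm_eq_norm_toLp_s4, ← b.sum_sq_norm_inner_right, star_dotProduct_eq_inner]

lemma Matrix.IsHermitian.star_dotProduct_mulVec_of_mulVec_eq_smul {A : Matrix n n ℂ}
    (hA : A.IsHermitian) {x : n → ℂ} {r : ℝ} (hx : A *ᵥ x = (r : ℂ) • x) (y : n → ℂ) :
    star x ⬝ᵥ (A *ᵥ y) = r * (star x ⬝ᵥ y) := by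
  rw [dotProduct_mulVec, ← hA.eq, ← star_mulVec, hx, star_smul, smul_dotProduct, smul_eq_mul,
    RCLike.star_def, Complex.conj_ofReal]

lemma Matrix.IsHermitian.eq_of_mulVec_eq_smul_of_star_dotProduct_ne_zero {H : Matrix n n ℂ}
    (hH : H.IsHermitian) {v w : n → ℂ} {μ ν : ℝ} (hv : H *ᵥ v = (ν : ℂ) • v)
    (hw : H *ᵥ w = (μ : ℂ) • w) (hvw : star v ⬝ᵥ w ≠ 0) : μ = ν := by
  have h := hH.star_dotProduct_mulVec_of_mulVec_eq_smul hv w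
  rw [hw, dotProduct_smul, smul_eq_mul] at h
  exact_mod_cast mul_right_cancel₀ hvw h

def OrthogonalEigenvaluesGe (H : Matrix n n ℂ) (v : n → ℂ) (c : ℝ) : Prop :=
  ∀ (μ : ℝ) (w : n → ℂ), w ≠ 0 → H *ᵥ w = (μ : ℂ) • w → star v ⬝ᵥ w = 0 → c ≤ μ

lemma OrthogonalEigenvaluesGe.eq_smul_of_mulVec_eq_smul {H : Matrix n n ℂ} {v : n → ℂ}
    {E₀ E₁ : ℝ} (hgap : OrthogonalEigenvaluesGe H v E₁) (hE : E₀ < E₁) (hv : star v ⬝ᵥ v = 1)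
    (hEv : H *ᵥ v = (E₀ : ℂ) • v) {w : n → ℂ} (hw : H *ᵥ w = (E₀ : ℂ) • w) :
    w = (star v ⬝ᵥ w) • v := by
  by_contra hne
  refine (hgap E₀ _ (sub_ne_zero.2 hne) ?_ ?_).not_gt hE
  · rw [mulVec_sub, mulVec_smul, hw, hEv, smul_comm, smul_sub]
  · rw [dotProduct_sub, dotProduct_smul, hv, smul_eq_mul, mul_one, sub_self]

end

section

variable {n : Type*} [Fintype n] [DecidableEq n]

lemma Matrix.exp_mulVec_of_mulVec_eq_smul {M : Matrix n n ℂ} {x : n → ℂ} {μ : ℂ}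
    (h : M *ᵥ x = μ • x) : NormedSpace.exp M *ᵥ x = Complex.exp μ • x := by
  have hpow (k : ℕ) : (M ^ k) *ᵥ x = μ ^ k • x := by
    induction k with
    | zero => simp
    | succ k ih => rw [pow_succ, ← mulVec_mulVec, h, mulVec_smul, ih, smul_smul, pow_succ']
  have hM := (NormedSpace.exp_series_hasSum_exp' (𝕂 := ℂ) M).map (mulVec.addMonoidHomLeft x)
    (continuous_id.matrix_mulVec continuous_const)
  have hμ := (NormedSpace.exp_series_hasSum_exp' (𝕂 := ℂ) μ).smul_const x
  rw [Complex.exp_eq_exp_ℂ]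
  refine hM.unique ?_
  convert hμ using 1
  ext k : 1
  simp [mulVec.addMonoidHomLeft, smul_mulVec, hpow, smul_smul]

lemma Matrix.IsHermitian.exp_neg_smul_mul_self {H : Matrix n n ℂ} (hH : H.IsHermitian) (s : ℝ) :
    (NormedSpace.exp (-(s : ℂ) • (H * H))).IsHermitian := by
  refine IsHermitian.exp (IsHermitian.smul ?_ ?_)
  · simpa [sq] using hH.pow 2
  · simp [IsSelfAdjoint]

lemma Matrix.exp_neg_smul_mul_self_mulVec_of_mulVec_eq_smul {H : Matrix n n ℂ} {x : n → ℂ}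
    {μ : ℝ} (hx : H *ᵥ x = (μ : ℂ) • x) (s : ℝ) :
    NormedSpace.exp (-(s : ℂ) • (H * H)) *ᵥ x = (Real.exp (-(s * μ ^ 2)) : ℂ) • x := by
  refine (exp_mulVec_of_mulVec_eq_smul ?_).trans (by push_cast; rfl)
  rw [smul_mulVec, ← mulVec_mulVec, hx, mulVec_smul, hx, smul_smul, smul_smul]
  congr 1
  ring

variable {H : Matrix n n ℂ} {v : n → ℂ} {E₀ E₁ s : ℝ}

lemma norm_sq_star_dotProduct_exp_mulVec_le (hH : H.IsHermitian)
    (hgap : OrthogonalEigenvaluesGe H v E₁) (hE : E₀ < E₁) (hE₁ : 0 ≤ E₁)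
    (hv : star v ⬝ᵥ v = 1) (hEv : H *ᵥ v = (E₀ : ℂ) • v) (hs : 0 ≤ s)
    {w : n → ℂ} {μ : ℝ} (hw0 : w ≠ 0) (hw : H *ᵥ w = (μ : ℂ) • w) (ψ : n → ℂ) :
    ‖star w ⬝ᵥ (NormedSpace.exp (-(s : ℂ) • (H * H)) *ᵥ ψ)‖ ^ 2 ≤
      (Real.exp (-(s * E₀ ^ 2)) * ‖star v ⬝ᵥ ψ‖) ^ 2 * ‖star v ⬝ᵥ w‖ ^ 2 +
        Real.exp (-(s * E₁ ^ 2)) ^ 2 * ‖star w ⬝ᵥ ψ‖ ^ 2 := by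
  rw [(hH.exp_neg_smul_mul_self s).star_dotProduct_mulVec_of_mulVec_eq_smul
    (exp_neg_smul_mul_self_mulVec_of_mulVec_eq_smul hw s), norm_mul,
    Complex.norm_of_nonneg (Real.exp_pos _).le, mul_pow]
  by_cases hvw : star v ⬝ᵥ w = 0
  · have hμ : E₁ ≤ μ := hgap μ w hw0 hw hvw
    have hexp : Real.exp (-(s * μ ^ 2)) ≤ Real.exp (-(s * E₁ ^ 2)) := by gcongr
    rw [hvw, norm_zero, zero_pow two_ne_zero, mul_zero, zero_add]
    gcongr
  · obtain rfl := hH.eq_of_mulVec_eq_smul_of_star_dotProduct_ne_zero hEv hw hvw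
    have hwψ : star w ⬝ᵥ ψ = star (star v ⬝ᵥ w) * (star v ⬝ᵥ ψ) := by
      conv_lhs => rw [hgap.eq_smul_of_mulVec_eq_smul hE hv hEv hw]
      rw [star_smul, smul_dotProduct, smul_eq_mul]
    rw [hwψ, norm_mul, norm_star]
    exact le_add_of_le_of_nonneg (le_of_eq (by ring)) (by positivity)

lemma vecNorm_exp_mulVec_sq_le (hH : H.IsHermitian)
    (hgap : OrthogonalEigenvaluesGe H v E₁) (hE : E₀ < E₁) (hE₁ : 0 ≤ E₁)
    (hv : vecNorm v = 1) (hEv : H *ᵥ v = (E₀ : ℂ) • v) (hs : 0 ≤ s) (ψ : n → ℂ) :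
    vecNorm (NormedSpace.exp (-(s : ℂ) • (H * H)) *ᵥ ψ) ^ 2 ≤
      (Real.exp (-(s * E₀ ^ 2)) * ‖star v ⬝ᵥ ψ‖) ^ 2 +
        Real.exp (-(s * E₁ ^ 2)) ^ 2 * vecNorm ψ ^ 2 := by
  set b := hH.eigenvectorBasis
  have hb (j : n) : H *ᵥ ⇑(b j) = ((hH.eigenvalues j : ℝ) : ℂ) • ⇑(b j) := by
    rw [hH.mulVec_eigenvectorBasis, Complex.coe_smul]
  have hb0 (j : n) : ⇑(b j) ≠ 0 := fun h => b.orthonormal.ne_zero j (by simpa using h)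
  have hvv : star v ⬝ᵥ v = 1 := by
    rw [star_dotProduct_self_eq_vecNorm_sq, hv]
    norm_num
  have hv_sum : ∑ j, ‖star v ⬝ᵥ ⇑(b j)‖ ^ 2 = 1 := by
    simp_rw [norm_star_dotProduct_comm v, ← vecNorm_sq_eq_sum_norm_sq, hv, one_pow]
  calc _ = ∑ j, ‖star ⇑(b j) ⬝ᵥ (NormedSpace.exp (-(s : ℂ) • (H * H)) *ᵥ ψ)‖ ^ 2 :=
        vecNorm_sq_eq_sum_norm_sq b _
    _ ≤ ∑ j, ((Real.exp (-(s * E₀ ^ 2)) * ‖star v ⬝ᵥ ψ‖) ^ 2 * ‖star v ⬝ᵥ ⇑(b j)‖ ^ 2 +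
          Real.exp (-(s * E₁ ^ 2)) ^ 2 * ‖star ⇑(b j) ⬝ᵥ ψ‖ ^ 2) :=
        Finset.sum_le_sum fun j _ =>
          norm_sq_star_dotProduct_exp_mulVec_le hH hgap hE hE₁ hvv hEv hs (hb0 j) (hb j) ψ
    _ = _ := by
      rw [Finset.sum_add_distrib, ← Finset.mul_sum, ← Finset.mul_sum, hv_sum,
        ← vecNorm_sq_eq_sum_norm_sq, mul_one]

end

lemma exp_neg_mul_add_sq_le_mul {E₀ Δ c τ : ℝ} (hE₀ : 0 ≤ E₀) (hΔ : 0 < Δ) (hc : 0 < c)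
    (hτ : (1 / Δ) * Real.sqrt (2 * Real.log (1 / c)) ≤ τ) :
    Real.exp (-(τ ^ 2 / 2 * (E₀ + Δ) ^ 2)) ≤ Real.exp (-(τ ^ 2 / 2 * E₀ ^ 2)) * c := by
  have hlog : 2 * Real.log (1 / c) ≤ (τ * Δ) ^ 2 := by
    rw [one_div_mul_eq_div, div_le_iff₀ hΔ] at hτ
    exact (Real.sqrt_le_iff.1 hτ).2
  rw [one_div, Real.log_inv] at hlog
  -- `(E₀ + Δ)² ≥ E₀² + Δ²` since `E₀ Δ ≥ 0`, and `τ² Δ² / 2 ≥ log (1 / c)`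
  calc _ ≤ Real.exp (-(τ ^ 2 / 2 * E₀ ^ 2) + Real.log c) :=
        Real.exp_le_exp.2 (by nlinarith [mul_nonneg (sq_nonneg τ) (mul_nonneg hE₀ hΔ.le)])
    _ = _ := by rw [Real.exp_add, Real.exp_log hc]

lemma one_sub_div_le_half_of_sq_le {a m x : ℝ} (hm : 0 < m) (ha : 0 ≤ a) (hx : x ≤ 3)
    (h : m ^ 2 ≤ a ^ 2 * (1 + x)) : 1 - a / m ≤ x / 2 := by
  rw [sub_le_comm, le_div_iff₀ hm]
  rcases le_or_gt (1 - x / 2) 0 with hneg | hpos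
  · nlinarith
  · refine le_of_pow_le_pow_left₀ two_ne_zero ha ?_
    calc ((1 - x / 2) * m) ^ 2 ≤ (1 - x / 2) ^ 2 * (a ^ 2 * (1 + x)) := by
          rw [mul_pow]; gcongr
      _ = a ^ 2 * (1 - x ^ 2 * (3 - x) / 4) := by ring
      _ ≤ a ^ 2 := by
          apply mul_le_of_le_one_right (sq_nonneg a)
          nlinarith [mul_nonneg (sq_nonneg x) (sub_nonneg.2 hx)]

theorem stmt_4_general {N : ℕ} (H : Matrix (Fin N) (Fin N) ℂ) (hH : H.IsHermitian)
    (E₀ Δ ε τ γ : ℝ) (hΔ : 0 < Δ)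
    (v : Fin N → ℂ) (hv : vecNorm v = 1) (hEv : H.mulVec v = (E₀ : ℂ) • v)
    (hE₀ : 0 ≤ E₀)
    (hgap : ∀ (μ : ℝ) (w : Fin N → ℂ), w ≠ 0 → H.mulVec w = (μ : ℂ) • w →
      star v ⬝ᵥ w = 0 → E₀ + Δ ≤ μ)
    (ψ₀ : Fin N → ℂ) (hψ₀ : vecNorm ψ₀ = 1)
    (hγ : γ = ‖star ψ₀ ⬝ᵥ v‖) (hγpos : 0 < γ)
    (hε : 0 < ε) (hε1 : ε ≤ 1)
    (hτ : (1 / Δ) * Real.sqrt (2 * Real.log (1 / (ε * γ))) ≤ τ)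
    (ψt : Fin N → ℂ)
    (hψt : ψt = (NormedSpace.exp (-((τ ^ 2 / 2 : ℝ) : ℂ) • (H * H))).mulVec ψ₀) :
    1 - ‖star ψt ⬝ᵥ v‖ / vecNorm ψt ≤ ε ^ 2 / 2 := by
  set e₀ := Real.exp (-(τ ^ 2 / 2 * E₀ ^ 2))
  have hoverlap : ‖star ψt ⬝ᵥ v‖ = e₀ * γ := by
    rw [hγ, norm_star_dotProduct_comm, hψt,
      (hH.exp_neg_smul_mul_self _).star_dotProduct_mulVec_of_mulVec_eq_smul
        (exp_neg_smul_mul_self_mulVec_of_mulVec_eq_smul hEv _),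
      norm_mul, Complex.norm_of_nonneg (Real.exp_pos _).le, norm_star_dotProduct_comm]
  have hψt0 : ψt ≠ 0 := by
    rintro rfl
    simp only [star_zero, zero_dotProduct, norm_zero] at hoverlap
    exact (mul_pos (Real.exp_pos _) hγpos).ne hoverlap
  have hnorm := vecNorm_exp_mulVec_sq_le (s := τ ^ 2 / 2) hH hgap (by linarith) (by linarith) hv
    hEv (by positivity) ψ₀
  rw [← hψt, hψ₀, norm_star_dotProduct_comm, ← hγ, one_pow, mul_one] at hnorm
  have hgap_exp := exp_neg_mul_add_sq_le_mul hE₀ hΔ (mul_pos hε hγpos) hτ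
  refine one_sub_div_le_half_of_sq_le (vecNorm_pos hψt0) (norm_nonneg _) (by nlinarith) ?_
  rw [hoverlap]
  calc vecNorm ψt ^ 2 ≤ (e₀ * γ) ^ 2 + (e₀ * (ε * γ)) ^ 2 := hnorm.trans (by gcongr)
    _ = (e₀ * γ) ^ 2 * (1 + ε ^ 2) := by ring

/-- Gaussian ground-state projection: for a Hermitian PSD matrix H with
nondegenerate ground eigenvalue E₀ and spectral gap at least Δ, a trial state ψ₀ with
ground overlap γ > 0, and τ ≥ (1/Δ)√(2 log(1/(εγ))), the normalized state
ψ = e^{−τ²H²/2}ψ₀ / ‖e^{−τ²H²/2}ψ₀‖ satisfies 1 − |⟨ψ|E₀⟩| ≤ ε²/2. -/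
theorem stmt_4 {N : ℕ} (H : Matrix (Fin N) (Fin N) ℂ) (hH : H.IsHermitian)
    (hpos : H.PosSemidef)
    (E₀ Δ ε τ γ : ℝ) (hΔ : 0 < Δ)
    (v : Fin N → ℂ) (hv : vecNorm v = 1) (hEv : H.mulVec v = (E₀ : ℂ) • v)
    (hE₀ : 0 ≤ E₀)
    (hgap : ∀ (μ : ℝ) (w : Fin N → ℂ), w ≠ 0 → H.mulVec w = (μ : ℂ) • w →
      star v ⬝ᵥ w = 0 → E₀ + Δ ≤ μ)
    (ψ₀ : Fin N → ℂ) (hψ₀ : vecNorm ψ₀ = 1)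
    (hγ : γ = ‖star ψ₀ ⬝ᵥ v‖) (hγpos : 0 < γ)
    (hε : 0 < ε) (hε1 : ε ≤ 1)
    (hτ : (1 / Δ) * Real.sqrt (2 * Real.log (1 / (ε * γ))) ≤ τ)
    (ψt : Fin N → ℂ)
    (hψt : ψt = (NormedSpace.exp (-((τ ^ 2 / 2 : ℝ) : ℂ) • (H * H))).mulVec ψ₀) :
    1 - ‖star ψt ⬝ᵥ v‖ / vecNorm ψt ≤ ε ^ 2 / 2 :=
  stmt_4_general H hH E₀ Δ ε τ γ hΔ v hv hEv hE₀ hgap ψ₀ hψ₀ hγ hγpos hε hε1 hτ ψt hψt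
end

section
/- Let A be a Hermitian matrix and g(x) := (i/√(2π)) ∫₀^{y_J} dy ∫_{−z_K}^{z_K} dz · z e^{−z²/2} e^{−ixyz}. For every x with 1/b ≤ |x| ≤ 1, the truncated double integral satisfies |g(x) − 1/x| ≤ (1/|x|) e^{−(x y_J)²/2} + (2/|x|) e^{−z_K²/2}. -/
open MeasureTheory

/-- The truncated Fourier-integral approximation to 1/x:
g(x) = (i/√(2π)) ∫₀^{y_J} ∫_{−z_K}^{z_K} z e^{−z²/2} e^{−ixyz} dz dy. -/
noncomputable def truncInv (yJ zK : ℝ) (x : ℝ) : ℂ :=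
  (Complex.I / (Real.sqrt (2 * Real.pi) : ℂ)) *
    ∫ y in (0 : ℝ)..yJ, ∫ z in (-zK)..zK,
      (z : ℂ) * Complex.exp (-(z : ℂ) ^ 2 / 2) * Complex.exp (-Complex.I * x * y * z)

/-!
Integrating first in `y` (Fubini on the compact rectangle) turns the integrand into the kernel
`e^{-z²/2} (1 - e^{-i x y_J z}) / (i x)`. Over the whole line the kernel integrates to
`√(2π) (1 - e^{-(x y_J)²/2}) / (i x)` by the Fourier transform of the Gaussian, which produces
`1/x` and the first error term. Truncating to `|z| ≤ z_K` costs at most `2/|x|` times the Gaussian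
tail `∫_{|z| > z_K} e^{-z²/2} ≤ √(2π) e^{-z_K²/2}`, a consequence of `(t + a)² ≥ t² + a²` for
`t, a ≥ 0`.
-/

open Set Real
open Complex (I)
open scoped Complex

lemma integral_Ioi_exp_neg_mul_sq_le {b a : ℝ} (hb : 0 < b) (ha : 0 ≤ a) :
    ∫ x in Ioi a, exp (-b * x ^ 2) ≤ exp (-b * a ^ 2) * (√(π / b) / 2) := by
  have hInt : Integrable fun x : ℝ => exp (-b * x ^ 2) := integrable_exp_neg_mul_sq hb
  have hshift : ∫ x in Ioi a, exp (-b * x ^ 2) = ∫ t in Ioi 0, exp (-b * (t + a) ^ 2) := by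
    rw [← (measurePreserving_add_right volume a).setIntegral_preimage_emb
      (measurableEmbedding_addRight a), preimage_add_const_Ioi, sub_self]
  have hle : ∀ t ∈ Ioi (0 : ℝ),
      exp (-b * (t + a) ^ 2) ≤ exp (-b * a ^ 2) * exp (-b * t ^ 2) := by
    intro t (ht : 0 < t)
    rw [← exp_add, exp_le_exp]
    nlinarith [mul_nonneg (mul_nonneg hb.le ht.le) ha]
  rw [hshift, ← integral_gaussian_Ioi, ← integral_const_mul]
  exact setIntegral_mono_on (hInt.comp_add_right a).integrableOn (hInt.const_mul _).integrableOn
    measurableSet_Ioi hle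

lemma integral_compl_Ioc_exp_neg_mul_sq_le {b a : ℝ} (hb : 0 < b) (ha : 0 ≤ a) :
    ∫ x in (Ioc (-a) a)ᶜ, exp (-b * x ^ 2) ≤ √(π / b) * exp (-b * a ^ 2) := by
  have hInt : Integrable fun x : ℝ => exp (-b * x ^ 2) := integrable_exp_neg_mul_sq hb
  have hIic : ∫ x in Iic (-a), exp (-b * x ^ 2) = ∫ x in Ioi a, exp (-b * x ^ 2) := by
    rw [← integral_comp_neg_Ioi]
    simp_rw [neg_sq]
  rw [compl_Ioc, setIntegral_union (Iic_disjoint_Ioi (by linarith)) measurableSet_Ioi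
    hInt.integrableOn hInt.integrableOn, hIic]
  linarith [integral_Ioi_exp_neg_mul_sq_le hb ha]

lemma norm_cexp_neg_sq_div_two (t : ℝ) : ‖cexp (-(t : ℂ) ^ 2 / 2)‖ = exp (-t ^ 2 / 2) := by
  rw [Complex.norm_exp]
  norm_cast

lemma integral_cexp_neg_sq_div_two_mul_cexp (τ : ℝ) :
    ∫ z : ℝ, cexp (-(z : ℂ) ^ 2 / 2) * cexp (-I * τ * z)
      = √(2 * π) * cexp (-(τ : ℂ) ^ 2 / 2) := by
  have hexp : ∀ z : ℝ, cexp (-(z : ℂ) ^ 2 / 2) * cexp (-I * τ * z)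
      = cexp (-1 / 2 * z ^ 2 + -I * τ * z + 0) := by
    intro z
    rw [← Complex.exp_add]
    ring_nf
  have hsqrt : ((π : ℂ) / -(-1 / 2)) ^ (1 / 2 : ℂ) = (√(2 * π) : ℝ) := by
    rw [sqrt_eq_rpow, Complex.ofReal_cpow (by positivity)]
    push_cast
    ring_nf
  simp_rw [hexp, integral_cexp_quadratic (by norm_num : (-1 / 2 : ℂ).re < 0), hsqrt]
  congr 2
  linear_combination ((τ : ℂ) ^ 2 / 2) * Complex.I_sq

lemma integrable_cexp_neg_sq_div_two_mul_cexp (τ : ℝ) :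
    Integrable fun z : ℝ => cexp (-(z : ℂ) ^ 2 / 2) * cexp (-I * τ * z) := by
  simp_rw [← Complex.exp_add]
  convert integrable_cexp_quadratic (b := 1 / 2) (by norm_num) (-I * τ) 0 using 3
  ring

lemma integral_ofReal_mul_cexp_neg_I_mul (x Y z : ℝ) (hx : x ≠ 0) :
    ∫ y in (0 : ℝ)..Y, (z : ℂ) * cexp (-I * x * y * z)
      = (1 - cexp (-I * x * Y * z)) / (I * x) := by
  have hxC : (x : ℂ) ≠ 0 := by exact_mod_cast hx
  have hderiv : ∀ y : ℝ, HasDerivAt (fun y : ℝ => -cexp (-I * x * y * z) / (I * x))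
      ((z : ℂ) * cexp (-I * x * y * z)) y := by
    intro y
    have h : HasDerivAt (fun w : ℂ => -cexp (-I * x * w * z) / (I * x))
        (-(cexp (-I * x * y * z) * (-I * x * 1 * z)) / (I * x)) y :=
      (((hasDerivAt_id' (y : ℂ)).const_mul (-I * x)).mul_const (z : ℂ)).cexp.neg.div_const _
    convert h.comp_ofReal using 1
    field_simp
  rw [intervalIntegral.integral_eq_sub_of_hasDerivAt (fun y _ => hderiv y)
    (by apply Continuous.intervalIntegrable; fun_prop)]
  simp only [Complex.ofReal_zero, mul_zero, zero_mul, Complex.exp_zero]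
  ring

noncomputable def truncInvKernel (yJ x z : ℝ) : ℂ :=
  cexp (-(z : ℂ) ^ 2 / 2) * (1 - cexp (-I * x * yJ * z)) / (I * x)

lemma integral_truncInv_integrand_eq_kernel (yJ : ℝ) {x : ℝ} (hx : x ≠ 0) (z : ℝ) :
    ∫ y in (0 : ℝ)..yJ, (z : ℂ) * cexp (-(z : ℂ) ^ 2 / 2) * cexp (-I * x * y * z)
      = truncInvKernel yJ x z := by
  have h : ∀ y : ℝ, (z : ℂ) * cexp (-(z : ℂ) ^ 2 / 2) * cexp (-I * x * y * z)
      = cexp (-(z : ℂ) ^ 2 / 2) * ((z : ℂ) * cexp (-I * x * y * z)) := fun y => by ring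
  simp_rw [h]
  rw [intervalIntegral.integral_const_mul, integral_ofReal_mul_cexp_neg_I_mul x yJ z hx,
    truncInvKernel, mul_div_assoc]

lemma truncInvKernel_eq_sub (yJ x z : ℝ) :
    truncInvKernel yJ x z = (cexp (-(z : ℂ) ^ 2 / 2) * cexp (-I * (0 : ℝ) * z)
      - cexp (-(z : ℂ) ^ 2 / 2) * cexp (-I * (x * yJ : ℝ) * z)) / (I * x) := by
  simp only [truncInvKernel, Complex.ofReal_zero, Complex.ofReal_mul, mul_zero, zero_mul,
    Complex.exp_zero]
  ring_nf

lemma integrable_truncInvKernel (yJ x : ℝ) : Integrable (truncInvKernel yJ x) := by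
  simp_rw [funext (truncInvKernel_eq_sub yJ x)]
  exact ((integrable_cexp_neg_sq_div_two_mul_cexp 0).sub
    (integrable_cexp_neg_sq_div_two_mul_cexp (x * yJ))).div_const _

lemma integral_truncInvKernel (yJ x : ℝ) :
    ∫ z, truncInvKernel yJ x z
      = √(2 * π) * (1 - cexp (-((x * yJ : ℝ) : ℂ) ^ 2 / 2)) / (I * x) := by
  simp_rw [truncInvKernel_eq_sub yJ x]
  rw [integral_div, integral_sub (integrable_cexp_neg_sq_div_two_mul_cexp 0)
    (integrable_cexp_neg_sq_div_two_mul_cexp (x * yJ)), integral_cexp_neg_sq_div_two_mul_cexp,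
    integral_cexp_neg_sq_div_two_mul_cexp]
  simp [mul_sub]

lemma norm_truncInvKernel_le (yJ x z : ℝ) :
    ‖truncInvKernel yJ x z‖ ≤ 2 / |x| * exp (-z ^ 2 / 2) := by
  have hphase : ‖1 - cexp (-I * x * yJ * z)‖ ≤ 2 :=
    (norm_sub_le _ _).trans (by norm_num [Complex.norm_exp])
  rw [truncInvKernel, norm_div, norm_mul, norm_cexp_neg_sq_div_two, norm_mul, Complex.norm_I,
    Complex.norm_real, norm_eq_abs, one_mul, div_mul_eq_mul_div, mul_comm]
  gcongr

lemma truncInv_eq_integral_truncInvKernel (yJ zK : ℝ) {x : ℝ} (hx : x ≠ 0) :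
    truncInv yJ zK x = I / √(2 * π) * ∫ z in (-zK)..zK, truncInvKernel yJ x z := by
  rw [truncInv, intervalIntegral_intervalIntegral_swap]
  · simp_rw [integral_truncInv_integrand_eq_kernel yJ hx]
  · exact (ContinuousOn.integrableOn_compact (isCompact_uIcc.prod isCompact_uIcc)
      (Continuous.continuousOn (by fun_prop))).mono_set
      (prod_mono uIoc_subset_uIcc uIoc_subset_uIcc)

lemma truncInv_sub_inv_eq (yJ : ℝ) {zK : ℝ} (hzK : 0 ≤ zK) {x : ℝ} (hx : x ≠ 0) :
    truncInv yJ zK x - 1 / x = -(cexp (-((x * yJ : ℝ) : ℂ) ^ 2 / 2) / x)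
      - I / √(2 * π) * ∫ z in (Ioc (-zK) zK)ᶜ, truncInvKernel yJ x z := by
  have hxC : (x : ℂ) ≠ 0 := by exact_mod_cast hx
  have hsqrt : (√(2 * π) : ℂ) ≠ 0 := by exact_mod_cast (by positivity : 0 < √(2 * π)).ne'
  rw [truncInv_eq_integral_truncInvKernel yJ zK hx, intervalIntegral.integral_of_le (by linarith),
    eq_sub_of_add_eq (integral_add_compl measurableSet_Ioc (integrable_truncInvKernel yJ x)),
    integral_truncInvKernel]
  field_simp
  ring

lemma norm_integral_compl_truncInvKernel_le (yJ : ℝ) {zK : ℝ} (hzK : 0 ≤ zK) (x : ℝ) :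
    ‖∫ z in (Ioc (-zK) zK)ᶜ, truncInvKernel yJ x z‖
      ≤ 2 / |x| * (√(2 * π) * exp (-zK ^ 2 / 2)) := by
  have hgauss : ∀ t : ℝ, exp (-(1 / 2) * t ^ 2) = exp (-t ^ 2 / 2) := fun t => by ring_nf
  have htail := integral_compl_Ioc_exp_neg_mul_sq_le (b := 1 / 2) (by norm_num) hzK
  simp_rw [hgauss, show π / (1 / 2) = 2 * π by ring] at htail
  have hInt : Integrable fun z : ℝ => 2 / |x| * exp (-z ^ 2 / 2) :=
    ((integrable_exp_neg_mul_sq (b := 1 / 2) (by norm_num)).congr (ae_of_all _ hgauss)).const_mul _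
  calc ‖∫ z in (Ioc (-zK) zK)ᶜ, truncInvKernel yJ x z‖
      ≤ ∫ z in (Ioc (-zK) zK)ᶜ, 2 / |x| * exp (-z ^ 2 / 2) :=
        norm_integral_le_of_norm_le hInt.integrableOn (ae_of_all _ (norm_truncInvKernel_le yJ x))
    _ = 2 / |x| * ∫ z in (Ioc (-zK) zK)ᶜ, exp (-z ^ 2 / 2) := integral_const_mul _ _
    _ ≤ 2 / |x| * (√(2 * π) * exp (-zK ^ 2 / 2)) := by gcongr

theorem stmt_10_general (b yJ zK : ℝ) (hb : 1 ≤ b) (hzK : 0 < zK)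
    (x : ℝ) (hx1 : 1 / b ≤ |x|) :
    ‖truncInv yJ zK x - 1 / (x : ℂ)‖
      ≤ (1 / |x|) * Real.exp (-(x * yJ) ^ 2 / 2) + (2 / |x|) * Real.exp (-zK ^ 2 / 2) := by
  have hx : x ≠ 0 := abs_pos.mp ((one_div_pos.mpr (by linarith)).trans_le hx1)
  have hsqrt : 0 < √(2 * π) := by positivity
  rw [truncInv_sub_inv_eq yJ hzK.le hx]
  refine (norm_sub_le _ _).trans (add_le_add (le_of_eq ?_) ?_)
  · rw [norm_neg, norm_div, norm_cexp_neg_sq_div_two, Complex.norm_real, norm_eq_abs]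
    ring
  · rw [norm_mul, norm_div, Complex.norm_I, Complex.norm_real, norm_of_nonneg hsqrt.le]
    calc 1 / √(2 * π) * ‖∫ z in (Ioc (-zK) zK)ᶜ, truncInvKernel yJ x z‖
        ≤ 1 / √(2 * π) * (2 / |x| * (√(2 * π) * exp (-zK ^ 2 / 2))) := by
          gcongr
          exact norm_integral_compl_truncInvKernel_le yJ hzK.le x
      _ = 2 / |x| * exp (-zK ^ 2 / 2) := by field_simp

/-- truncation error bound for the Fourier-integral representation of 1/x,
valid for 1/b ≤ |x| ≤ 1. -/
theorem stmt_10 (b yJ zK : ℝ) (hb : 1 ≤ b) (hyJ : 0 < yJ) (hzK : 0 < zK)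
    (x : ℝ) (hx1 : 1 / b ≤ |x|) (hx2 : |x| ≤ 1) :
    ‖truncInv yJ zK x - 1 / (x : ℂ)‖
      ≤ (1 / |x|) * Real.exp (-(x * yJ) ^ 2 / 2) + (2 / |x|) * Real.exp (-zK ^ 2 / 2) :=
  stmt_10_general b yJ zK hb hzK x hx1
end

section
/- For every x ≠ 0, (i/√(2π)) ∫₀^∞ ∫_{−∞}^{∞} z e^{−z²/2} e^{−ixyz} dz dy = 1/x. -/
/-!
Integrating by parts against the antiderivative `-e^{-z²/2}` of `z e^{-z²/2}` turns the inner
integral into the Fourier transform of the Gaussian, `-i a √(2π) e^{-a²/2}` with `a = xy`.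
The outer integral is then `-i √(2π) x ∫₀^∞ y e^{-x²y²/2} dy = -i √(2π) x / x²`.
-/

open MeasureTheory Real Complex

lemma Integrable.cexp_I_mul_mul {f : ℝ → ℂ} (hf : Integrable f) (t : ℝ) :
    Integrable fun x : ℝ => cexp (I * t * x) * f x := by
  refine hf.bdd_mul (c := 1) (by fun_prop) (ae_of_all _ fun x => ?_)
  rw [show I * t * x = ((t * x : ℝ) : ℂ) * I by push_cast; ring, norm_exp_ofReal_mul_I]

theorem integral_mul_cexp_neg_mul_sq_mul_cexp_I_mul {b : ℂ} (hb : 0 < b.re) (t : ℝ) :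
    ∫ x : ℝ, (x : ℂ) * cexp (-b * x ^ 2) * cexp (I * t * x)
      = I * t / (2 * b) * ((π / b) ^ (1 / 2 : ℂ) * cexp (-(t : ℂ) ^ 2 / (4 * b))) := by
  have hb0 : b ≠ 0 := by rintro rfl; simp at hb
  have hu : ∀ x : ℝ, HasDerivAt (fun x : ℝ => cexp (I * t * x)) (I * t * cexp (I * t * x)) x :=
    fun x => by simpa [mul_comm] using ((hasDerivAt_id (x : ℂ)).const_mul (I * t)).cexp.comp_ofReal
  have hv : ∀ x : ℝ, HasDerivAt (fun x : ℝ => -(2 * b)⁻¹ * cexp (-b * x ^ 2))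
      (x * cexp (-b * x ^ 2)) x := fun x => by
    have := (((hasDerivAt_pow 2 (x : ℂ)).const_mul (-b)).cexp.const_mul (-(2 * b)⁻¹)).comp_ofReal
    convert this using 1
    field_simp
    ring
  have hg := Integrable.cexp_I_mul_mul (integrable_cexp_neg_mul_sq hb) t
  have ibp := integral_mul_deriv_eq_deriv_mul_of_integrable (fun x _ => hu x) (fun x _ => hv x)
    (Integrable.cexp_I_mul_mul (integrable_mul_cexp_neg_mul_sq hb) t)
    (by simpa only [Pi.mul_def, mul_mul_mul_comm] using hg.const_mul (I * t * -(2 * b)⁻¹))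
    (by simpa only [Pi.mul_def, mul_left_comm] using hg.const_mul (-(2 * b)⁻¹))
  calc ∫ x : ℝ, (x : ℂ) * cexp (-b * x ^ 2) * cexp (I * t * x)
      = ∫ x : ℝ, cexp (I * t * x) * (x * cexp (-b * x ^ 2)) := by
        congr 1 with x
        ring
    _ = I * t / (2 * b) * ∫ x : ℝ, cexp (I * t * x) * cexp (-b * x ^ 2) := by
      rw [ibp, ← integral_const_mul, ← integral_neg]
      congr 1 with x
      ring
    _ = _ := by rw [fourierIntegral_gaussian hb]

lemma integral_mul_gaussian_mul_cexp (a : ℝ) :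
    ∫ z : ℝ, (z : ℂ) * cexp (-(z : ℂ) ^ 2 / 2) * cexp (-I * a * z)
      = -I * a * √(2 * π) * cexp (-(a : ℂ) ^ 2 / 2) := by
  have h := integral_mul_cexp_neg_mul_sq_mul_cexp_I_mul (b := 1 / 2) (by norm_num) (-a)
  have hsqrt : ((π : ℂ) / (1 / 2)) ^ (1 / 2 : ℂ) = (√(2 * π) : ℂ) := by
    rw [show (π : ℂ) / (1 / 2) = ((2 * π : ℝ) : ℂ) by push_cast; ring, Real.sqrt_eq_rpow,
      ofReal_cpow (by positivity)]
    norm_num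
  rw [hsqrt] at h
  convert h using 1
  · congr 1 with z
    push_cast
    ring_nf
  · push_cast
    ring_nf

/-- the exact Fourier-integral representation of the inverse function,
(i/√(2π)) ∫₀^∞ ∫_{−∞}^∞ z e^{−z²/2} e^{−ixyz} dz dy = 1/x for x ≠ 0. -/
theorem stmt_11 (x : ℝ) (hx : x ≠ 0) :
    (Complex.I / (Real.sqrt (2 * Real.pi) : ℂ)) *
      ∫ y in Set.Ioi (0 : ℝ), ∫ z : ℝ,
        (z : ℂ) * Complex.exp (-(z : ℂ) ^ 2 / 2) * Complex.exp (-Complex.I * x * y * z)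
      = 1 / (x : ℂ) := by
  have inner (y : ℝ) : ∫ z : ℝ, (z : ℂ) * cexp (-(z : ℂ) ^ 2 / 2) * cexp (-I * x * y * z)
      = -I * √(2 * π) * x * (y * cexp (-((x : ℂ) ^ 2 / 2) * y ^ 2)) := by
    convert integral_mul_gaussian_mul_cexp (x * y) using 1
    · simp_rw [ofReal_mul, mul_assoc]
    · push_cast
      ring_nf
  have hre : 0 < ((x : ℂ) ^ 2 / 2).re := by
    rw [← ofReal_pow, ← ofReal_ofNat, ← ofReal_div, ofReal_re]
    positivity
  have hsqrt : (√(2 * π) : ℂ) ≠ 0 := ofReal_ne_zero.mpr (by positivity)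
  have hx' : (x : ℂ) ≠ 0 := ofReal_ne_zero.mpr hx
  simp_rw [inner]
  rw [integral_const_mul, integral_mul_cexp_neg_mul_sq hre]
  field_simp
  rw [I_sq, neg_neg]
end
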